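/- Let n ≥ 1, let f be (n+1) times continuously differentiable on I = [a,b], and assume that f, f′, …, f^{(n+1)} do not vanish anywhere on I. Let 0 < δ < (b−a)/2 and put J = [a+δ, b−δ]. Then sup_{x ∈ J} |f^{(n)}(x)| ≤ (n/δ)^n · sup_{x ∈ I} |f(x)|. -/

import Mathlib

/-!
Put `h = δ / n` and show by induction on `k ≤ n` that `|f⁽ᵏ⁾| ≤ h⁻ᵏ · sup |f|` on
`[a + k h, b - k h]`. For the step, the mean value theorem on `[x - h, x]` and `[x, x + h]` gives
points `ξ < x < η` where `|f⁽ᵏ⁺¹⁾|` is at most `h⁻¹` times a difference of two values of `f⁽ᵏ⁾`;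
as `f⁽ᵏ⁾` has constant sign, that difference is at most `h⁻ᵏ · sup |f|`. Since `f⁽ᵏ⁺²⁾` also has
constant sign, `f⁽ᵏ⁺¹⁾` is monotone, so `f⁽ᵏ⁺¹⁾(x)` lies between its values at `ξ` and `η`.
-/

open Set

def HasConstSignOn (g : ℝ → ℝ) (s : Set ℝ) : Prop :=
  (∀ t ∈ s, 0 ≤ g t) ∨ (∀ t ∈ s, g t ≤ 0)

namespace HasConstSignOn

variable {g : ℝ → ℝ} {s t : Set ℝ}

theorem mono (hg : HasConstSignOn g s) (hts : t ⊆ s) : HasConstSignOn g t :=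
  hg.imp (fun h x hx => h x (hts hx)) (fun h x hx => h x (hts hx))

theorem of_ne_zero (hs : IsPreconnected s) (hg : ContinuousOn g s) (h0 : ∀ x ∈ s, g x ≠ 0) :
    HasConstSignOn g s := by
  by_contra hsign
  unfold HasConstSignOn at hsign
  push Not at hsign
  obtain ⟨⟨x, hx, hgx⟩, ⟨y, hy, hgy⟩⟩ := hsign
  obtain ⟨z, hz, hgz⟩ := hs.intermediate_value hx hy hg ⟨hgx.le, hgy.le⟩
  exact h0 z hz hgz

theorem abs_sub_le (hg : HasConstSignOn g s) {x y C : ℝ} (hx : x ∈ s) (hy : y ∈ s)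
    (hgx : |g x| ≤ C) (hgy : |g y| ≤ C) : |g x - g y| ≤ C := by
  rw [abs_le] at *
  rcases hg with hg | hg
  · have := hg x hx; have := hg y hy
    constructor <;> linarith
  · have := hg x hx; have := hg y hy
    constructor <;> linarith

theorem monotoneOn_or_antitoneOn {g' : ℝ → ℝ} (hs : Convex ℝ s) (hso : IsOpen s)
    (hderiv : ∀ x ∈ s, HasDerivAt g (g' x) x) (hsign : HasConstSignOn g' s) :
    MonotoneOn g s ∨ AntitoneOn g s := by
  have hcont : ContinuousOn g s := fun x hx => (hderiv x hx).continuousAt.continuousWithinAt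
  have hderiv' : ∀ x ∈ interior s, HasDerivWithinAt g (g' x) (interior s) x := fun x hx =>
    (hderiv x (interior_subset hx)).hasDerivWithinAt
  rw [← hso.interior_eq] at hsign
  exact hsign.imp (monotoneOn_of_hasDerivWithinAt_nonneg hs hcont hderiv')
    (antitoneOn_of_hasDerivWithinAt_nonpos hs hcont hderiv')

end HasConstSignOn

theorem exists_abs_deriv_le_of_hasConstSignOn {g g' : ℝ → ℝ} {c d C : ℝ} (hcd : c < d)
    (hcont : ContinuousOn g (Icc c d)) (hderiv : ∀ x ∈ Ioo c d, HasDerivAt g (g' x) x)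
    (hsign : HasConstSignOn g (Icc c d)) (hC : ∀ x ∈ Icc c d, |g x| ≤ C) :
    ∃ ξ ∈ Ioo c d, |g' ξ| ≤ C / (d - c) := by
  obtain ⟨ξ, hξ, hslope⟩ := exists_hasDerivAt_eq_slope g g' hcd hcont hderiv
  have hd : d ∈ Icc c d := right_mem_Icc.mpr hcd.le
  have hc : c ∈ Icc c d := left_mem_Icc.mpr hcd.le
  refine ⟨ξ, hξ, ?_⟩
  rw [hslope, abs_div, abs_of_pos (sub_pos.mpr hcd)]
  exact div_le_div_of_nonneg_right (hsign.abs_sub_le hd hc (hC d hd) (hC c hc))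
    (sub_pos.mpr hcd).le

theorem abs_deriv_le_of_hasConstSignOn {g g' : ℝ → ℝ} {x h C : ℝ} (hh : 0 < h)
    (hcont : ContinuousOn g (Icc (x - h) (x + h)))
    (hderiv : ∀ t ∈ Ioo (x - h) (x + h), HasDerivAt g (g' t) t)
    (hsign : HasConstSignOn g (Icc (x - h) (x + h)))
    (hC : ∀ t ∈ Icc (x - h) (x + h), |g t| ≤ C)
    (hmono : MonotoneOn g' (Ioo (x - h) (x + h)) ∨ AntitoneOn g' (Ioo (x - h) (x + h))) :
    |g' x| ≤ C / h := by
  have hleft : Icc (x - h) x ⊆ Icc (x - h) (x + h) := Icc_subset_Icc_right (by linarith)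
  have hright : Icc x (x + h) ⊆ Icc (x - h) (x + h) := Icc_subset_Icc_left (by linarith)
  obtain ⟨ξ, hξ, hξC⟩ := exists_abs_deriv_le_of_hasConstSignOn (by linarith) (hcont.mono hleft)
    (fun t ht => hderiv t (Ioo_subset_Ioo_right (by linarith) ht)) (hsign.mono hleft)
    (fun t ht => hC t (hleft ht))
  obtain ⟨η, hη, hηC⟩ := exists_abs_deriv_le_of_hasConstSignOn (by linarith) (hcont.mono hright)
    (fun t ht => hderiv t (Ioo_subset_Ioo_left (by linarith) ht)) (hsign.mono hright)
    (fun t ht => hC t (hright ht))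
  rw [sub_sub_cancel] at hξC
  rw [add_sub_cancel_left] at hηC
  have hξ' : ξ ∈ Ioo (x - h) (x + h) := ⟨hξ.1, by linarith [hξ.2]⟩
  have hη' : η ∈ Ioo (x - h) (x + h) := ⟨by linarith [hη.1], hη.2⟩
  have hx : x ∈ Ioo (x - h) (x + h) := ⟨by linarith, by linarith⟩
  have hbetween : |g' x| ≤ max |g' ξ| |g' η| := by
    rcases hmono with hmono | hmono
    · exact abs_le_max_abs_abs (hmono hξ' hx hξ.2.le) (hmono hx hη' hη.1.le)
    · rw [max_comm]
      exact abs_le_max_abs_abs (hmono hx hη' hη.1.le) (hmono hξ' hx hξ.2.le)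
  exact hbetween.trans (max_le hξC hηC)

theorem abs_le_inv_pow_mul_of_hasConstSignOn {g : ℕ → ℝ → ℝ} {n : ℕ} {a b h M : ℝ}
    (hcont : ∀ k ≤ n, ContinuousOn (g k) (Icc a b))
    (hderiv : ∀ k ≤ n, ∀ t ∈ Ioo a b, HasDerivAt (g k) (g (k + 1) t) t)
    (hsign : ∀ k ≤ n + 1, HasConstSignOn (g k) (Icc a b))
    (hh : 0 < h) (hM : ∀ t ∈ Icc a b, |g 0 t| ≤ M) :
    ∀ k ≤ n, ∀ x ∈ Icc (a + k * h) (b - k * h), |g k x| ≤ h⁻¹ ^ k * M := by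
  intro k
  induction k with
  | zero => simpa using hM
  | succ k ih =>
    intro hk x hx
    have hkh : 0 ≤ (k : ℝ) * h := by positivity
    push_cast at hx
    have hshrink : Icc (x - h) (x + h) ⊆ Icc (a + k * h) (b - k * h) :=
      Icc_subset_Icc (by linarith [hx.1]) (by linarith [hx.2])
    have hIcc : Icc (x - h) (x + h) ⊆ Icc a b :=
      hshrink.trans (Icc_subset_Icc (by linarith) (by linarith))
    have hIoo : Ioo (x - h) (x + h) ⊆ Ioo a b :=
      Ioo_subset_Ioo (by linarith [hx.1]) (by linarith [hx.2])
    have hmono := HasConstSignOn.monotoneOn_or_antitoneOn (convex_Ioo _ _) isOpen_Ioo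
      (fun t ht => hderiv (k + 1) hk t (hIoo ht))
      ((hsign (k + 2) (by omega)).mono (Ioo_subset_Icc_self.trans hIcc))
    calc |g (k + 1) x| ≤ h⁻¹ ^ k * M / h :=
          abs_deriv_le_of_hasConstSignOn hh ((hcont k (by omega)).mono hIcc)
            (fun t ht => hderiv k (by omega) t (hIoo ht)) ((hsign k (by omega)).mono hIcc)
            (fun t ht => ih (by omega) t (hshrink ht)) hmono
      _ = h⁻¹ ^ (k + 1) * M := by rw [pow_succ, div_eq_mul_inv]; ring

theorem ContDiffOn.hasDerivAt_iteratedDerivWithin {𝕜 F : Type*} [NontriviallyNormedField 𝕜]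
    [NormedAddCommGroup F] [NormedSpace 𝕜 F] {f : 𝕜 → F} {s : Set 𝕜} {n : WithTop ℕ∞} {k : ℕ}
    {x : 𝕜} (hf : ContDiffOn 𝕜 n f s) (hk : k < n) (hs : UniqueDiffOn 𝕜 s) (hx : s ∈ nhds x) :
    HasDerivAt (iteratedDerivWithin k f s) (iteratedDerivWithin (k + 1) f s x) x := by
  rw [iteratedDerivWithin_succ]
  exact ((hf.differentiableOn_iteratedDerivWithin hk hs) x
    (mem_of_mem_nhds hx)).hasDerivWithinAt.hasDerivAt hx

theorem nth_deriv_bound_general (n : ℕ) (a b δ : ℝ) (f : ℝ → ℝ)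
    (hf : ContDiffOn ℝ (n + 1 : ℕ) f (Icc a b))
    (hf0 : ∀ k ≤ n + 1, ∀ x ∈ Icc a b, iteratedDerivWithin k f (Icc a b) x ≠ 0)
    (hδ0 : 0 < δ) :
    ∀ x ∈ Icc (a + δ) (b - δ),
      |iteratedDerivWithin n f (Icc a b) x| ≤
        ((n : ℝ) / δ) ^ n * sSup ((fun t => |f t|) '' Icc a b) := by
  intro x hx
  have hab : a < b := by linarith [hx.1, hx.2]
  have hud : UniqueDiffOn ℝ (Icc a b) := uniqueDiffOn_Icc hab
  have hM : ∀ t ∈ Icc a b, |f t| ≤ sSup ((fun t => |f t|) '' Icc a b) := fun t ht =>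
    le_csSup (isCompact_Icc.bddAbove_image hf.continuousOn.abs) (mem_image_of_mem _ ht)
  rcases n.eq_zero_or_pos with rfl | hn
  · simpa using hM x (Icc_subset_Icc (by linarith) (by linarith) hx)
  have hn' : (0 : ℝ) < n := Nat.cast_pos.mpr hn
  have hcont : ∀ k ≤ n + 1, ContinuousOn (iteratedDerivWithin k f (Icc a b)) (Icc a b) :=
    fun k hk => hf.continuousOn_iteratedDerivWithin (by exact_mod_cast hk) hud
  have hderiv : ∀ k ≤ n, ∀ t ∈ Ioo a b, HasDerivAt (iteratedDerivWithin k f (Icc a b))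
      (iteratedDerivWithin (k + 1) f (Icc a b) t) t := fun k hk t ht =>
    hf.hasDerivAt_iteratedDerivWithin (by exact_mod_cast Nat.lt_succ_of_le hk) hud
      (Icc_mem_nhds ht.1 ht.2)
  have hsign : ∀ k ≤ n + 1, HasConstSignOn (iteratedDerivWithin k f (Icc a b)) (Icc a b) :=
    fun k hk => .of_ne_zero isPreconnected_Icc (hcont k hk) (hf0 k hk)
  have hbound := abs_le_inv_pow_mul_of_hasConstSignOn (fun k hk => hcont k (by omega)) hderiv
    hsign (div_pos hδ0 hn') (by simpa using hM) n le_rfl x (by rwa [mul_div_cancel₀ _ hn'.ne'])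
  rwa [inv_div] at hbound

/-- If `f` is `C^{n+1}` on `[a,b]` and `f, f′, …, f^{(n+1)}` do not vanish on `[a,b]`,
then on `J = [a+δ, b−δ]` one has `‖f^{(n)}|_J‖ ≤ (n/δ)^n·‖f‖`. -/
theorem nth_deriv_bound (n : ℕ) (hn : 1 ≤ n) (a b δ : ℝ) (f : ℝ → ℝ)
    (hf : ContDiffOn ℝ (n + 1 : ℕ) f (Icc a b))
    (hf0 : ∀ k ≤ n + 1, ∀ x ∈ Icc a b, iteratedDerivWithin k f (Icc a b) x ≠ 0)
    (hδ0 : 0 < δ) (hδ : δ < (b - a) / 2) :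
    ∀ x ∈ Icc (a + δ) (b - δ),
      |iteratedDerivWithin n f (Icc a b) x| ≤
        ((n : ℝ) / δ) ^ n * sSup ((fun t => |f t|) '' Icc a b) :=
  nth_deriv_bound_general n a b δ f hf hf0 hδ0
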